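/- Let p be a prime number and let K ⊆ K' be fields of characteristic 0, each complete with respect to a nonarchimedean absolute value induced by a discrete valuation, such that the absolute value of K' restricts to that of K. Let λ := Σ_{k≥0} (−1)^k X^k/(k+1) ∈ K⟦X⟧ (the power series log(1+X)/X, whose coefficients are rational numbers). Then λ ∈ B_rig,K^+, and inside B_rig,K'^+ one has λ·B_rig,K'^+ ∩ B_rig,K^+ = λ·B_rig,K^+; that is, if y ∈ B_rig,K'^+ satisfies λ·y ∈ B_rig,K^+, then y ∈ B_rig,K^+. -/

import Mathlib

open PowerSeries Filter Finset

/-- The ring of power series converging on the open unit disk over `K`: those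
`f = Σ aₖ Xᵏ` with `‖aₖ‖ * ρᵏ → 0` for every `0 ≤ ρ < 1`. -/
noncomputable def BRig (K : Type*) [NormedField K] : Subring (PowerSeries K) where
  carrier := {f | ∀ ρ : ℝ, 0 ≤ ρ → ρ < 1 →
    Tendsto (fun k : ℕ => ‖(PowerSeries.coeff (R := K) k) f‖ * ρ ^ k) atTop (nhds 0)}
  zero_mem' := by
    intro ρ _ _
    simp
  one_mem' := by
    intro ρ _ _
    refine tendsto_const_nhds.congr' ?_
    filter_upwards [eventually_ge_atTop 1] with k hk
    have : (PowerSeries.coeff (R := K) k) 1 = 0 := by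
      simp [PowerSeries.coeff_one, Nat.one_le_iff_ne_zero.mp hk]
    simp [this]
  add_mem' := by
    intro f g hf hg ρ h0 h1
    have hlim : Tendsto (fun k : ℕ => ‖(PowerSeries.coeff (R := K) k) f‖ * ρ ^ k
        + ‖(PowerSeries.coeff (R := K) k) g‖ * ρ ^ k) atTop (nhds 0) := by
      simpa using (hf ρ h0 h1).add (hg ρ h0 h1)
    refine squeeze_zero (fun k => by positivity) (fun k => ?_) hlim
    have hb : ‖(PowerSeries.coeff (R := K) k) (f + g)‖
        ≤ ‖(PowerSeries.coeff (R := K) k) f‖ + ‖(PowerSeries.coeff (R := K) k) g‖ := by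
      simp only [map_add]; exact norm_add_le _ _
    calc ‖(PowerSeries.coeff (R := K) k) (f + g)‖ * ρ ^ k
        ≤ (‖(PowerSeries.coeff (R := K) k) f‖ + ‖(PowerSeries.coeff (R := K) k) g‖) * ρ ^ k :=
          mul_le_mul_of_nonneg_right hb (by positivity)
      _ = ‖(PowerSeries.coeff (R := K) k) f‖ * ρ ^ k + ‖(PowerSeries.coeff (R := K) k) g‖ * ρ ^ k := by ring
  neg_mem' := by
    intro f hf ρ h0 h1
    simpa using hf ρ h0 h1
  mul_mem' := by
    intro f g hf hg ρ h0 h1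
    obtain ⟨ρ', hρ'0, hρ'1, hρρ'⟩ : ∃ ρ' : ℝ, 0 < ρ' ∧ ρ' < 1 ∧ ρ < ρ' :=
      ⟨(ρ + 1) / 2, by linarith, by linarith, by linarith⟩
    obtain ⟨Ca, hCa⟩ := (hf ρ' hρ'0.le hρ'1).bddAbove_range
    obtain ⟨Cb, hCb⟩ := (hg ρ' hρ'0.le hρ'1).bddAbove_range
    obtain ⟨Cf, hCf0, hfb⟩ : ∃ C : ℝ, 0 < C ∧ ∀ k : ℕ, ‖(PowerSeries.coeff (R := K) k) f‖ ≤ C / ρ' ^ k := by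
      refine ⟨max Ca 1, lt_of_lt_of_le one_pos (le_max_right _ _), fun k => ?_⟩
      rw [le_div_iff₀ (by positivity)]
      exact le_trans (hCa (Set.mem_range_self k)) (le_max_left _ _)
    obtain ⟨Cg, hCg0, hgb⟩ : ∃ C : ℝ, 0 < C ∧ ∀ k : ℕ, ‖(PowerSeries.coeff (R := K) k) g‖ ≤ C / ρ' ^ k := by
      refine ⟨max Cb 1, lt_of_lt_of_le one_pos (le_max_right _ _), fun k => ?_⟩
      rw [le_div_iff₀ (by positivity)]
      exact le_trans (hCb (Set.mem_range_self k)) (le_max_left _ _)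
    have hr0 : 0 ≤ ρ / ρ' := by positivity
    have hr1 : ρ / ρ' < 1 := (div_lt_one hρ'0).mpr hρρ'
    have hlim : Tendsto (fun n : ℕ => Cf * Cg * (((n:ℝ) + 1) * (ρ / ρ') ^ n)) atTop (nhds 0) := by
      have h1' : Tendsto (fun n : ℕ => (n:ℝ) * (ρ / ρ') ^ n) atTop (nhds 0) := by
        have := (summable_pow_mul_geometric_of_norm_lt_one 1
          (r := ρ / ρ') (by rwa [Real.norm_eq_abs, abs_of_nonneg hr0])).tendsto_atTop_zero
        simpa using this
      have h2' : Tendsto (fun n : ℕ => (ρ / ρ') ^ n) atTop (nhds 0) :=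
        tendsto_pow_atTop_nhds_zero_of_lt_one hr0 hr1
      have := (h1'.add h2').const_mul (Cf * Cg)
      simpa [add_mul, mul_add] using this
    refine squeeze_zero (fun k => by positivity) (fun n => ?_) hlim
    have hstep : ‖(PowerSeries.coeff (R := K) n) (f * g)‖ ≤ ((n:ℝ) + 1) * (Cf * Cg / ρ' ^ n) := by
      rw [PowerSeries.coeff_mul]
      calc ‖∑ p ∈ antidiagonal n, (PowerSeries.coeff (R := K) p.1) f * (PowerSeries.coeff (R := K) p.2) g‖
          ≤ ∑ p ∈ antidiagonal n, ‖(PowerSeries.coeff (R := K) p.1) f * (PowerSeries.coeff (R := K) p.2) g‖ :=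
            norm_sum_le _ _
        _ ≤ ∑ _p ∈ antidiagonal n, Cf * Cg / ρ' ^ n := by
            refine Finset.sum_le_sum fun p hp => ?_
            rw [Finset.HasAntidiagonal.mem_antidiagonal] at hp
            calc ‖(PowerSeries.coeff (R := K) p.1) f * (PowerSeries.coeff (R := K) p.2) g‖
                = ‖(PowerSeries.coeff (R := K) p.1) f‖ * ‖(PowerSeries.coeff (R := K) p.2) g‖ := norm_mul _ _
              _ ≤ Cf / ρ' ^ p.1 * (Cg / ρ' ^ p.2) :=
                  mul_le_mul (hfb p.1) (hgb p.2) (norm_nonneg _) (by positivity)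
              _ = Cf * Cg / ρ' ^ n := by
                  rw [div_mul_div_comm, ← pow_add, hp]
        _ = ((n:ℝ) + 1) * (Cf * Cg / ρ' ^ n) := by
            rw [Finset.sum_const, Finset.Nat.card_antidiagonal]

            ring
    have hρ'ne : ρ' ^ n ≠ 0 := by positivity
    calc ‖(PowerSeries.coeff (R := K) n) (f * g)‖ * ρ ^ n
        ≤ ((n:ℝ) + 1) * (Cf * Cg / ρ' ^ n) * ρ ^ n := by gcongr
      _ = Cf * Cg * (((n:ℝ) + 1) * (ρ / ρ') ^ n) := by
          rw [div_pow]
          field_simp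

/-!
`λ` has constant coefficient `1`, hence is a unit of `K⟦X⟧`. If `λ·y = x` with `x ∈ K⟦X⟧`, then
`y = λ⁻¹·x` has coefficients in `K`, and since `K → K'` is an isometry, the growth condition
defining `B⁺_rig` holds over `K` as soon as it holds over `K'`.

That `λ` itself lies in `B⁺_rig,K` comes from Ostrowski's theorem: the norm of `K` restricted to
`ℚ` is trivial or a power of a `p`-adic norm, and `|n|_p ≥ 1/n`, so the coefficients
`‖1/(k+1)‖` grow at most polynomially in `k`.
-/

def NormedField.ratAbsoluteValue (K : Type*) [NormedField K] [CharZero K] : AbsoluteValue ℚ ℝ where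
  toFun q := ‖(q : K)‖
  map_mul' x y := by simp
  nonneg' _ := norm_nonneg _
  eq_zero' _ := by simp
  add_le' x y := by simpa using norm_add_le (x : K) y

lemma inv_natCast_le_padicNorm (p : ℕ) [Fact p.Prime] {n : ℕ} (hn : n ≠ 0) :
    (n : ℚ)⁻¹ ≤ padicNorm p n := by
  rw [padicNorm.eq_zpow_of_nonzero (by exact_mod_cast hn), padicValRat.of_nat, zpow_neg,
    zpow_natCast]
  exact inv_anti₀ (by have := (Fact.out : p.Prime).pos; positivity)
    (mod_cast Nat.le_of_dvd (Nat.pos_of_ne_zero hn) pow_padicValNat_dvd)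

lemma exists_norm_natCast_inv_le_pow {K : Type*} [NormedField K] [CharZero K]
    (hna : IsNonarchimedean (fun x : K => ‖x‖)) :
    ∃ M : ℕ, ∀ n : ℕ, ‖(n : K)‖⁻¹ ≤ (n : ℝ) ^ M := by
  set v := NormedField.ratAbsoluteValue K
  have hv (n : ℕ) : v n = ‖(n : K)‖ := by simp [v, NormedField.ratAbsoluteValue]
  by_cases hnontriv : v.IsNontrivial
  swap
  · refine ⟨0, fun n => ?_⟩
    rcases eq_or_ne n 0 with rfl | hn
    · simp
    · rw [← hv, AbsoluteValue.not_isNontrivial_apply hnontriv (by exact_mod_cast hn)]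
      simp
  have hbdd (n : ℕ) : v n ≤ 1 :=
    hv n ▸ IsNonarchimedean.apply_natCast_le_one (f := NormedField.toAbsoluteValue K) hna
  obtain ⟨p, ⟨_, hequiv⟩, -⟩ := Rat.AbsoluteValue.equiv_padic_of_bounded hnontriv hbdd
  obtain ⟨c, hc, hpow⟩ := Rat.AbsoluteValue.exists_nat_rpow_iff_isEquiv.mpr hequiv
  refine ⟨⌈c⁻¹⌉₊, fun n => ?_⟩
  rcases eq_or_ne n 0 with rfl | hn
  · simp
  have hn1 : (1 : ℝ) ≤ n := mod_cast Nat.one_le_iff_ne_zero.mpr hn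
  have hnorm : 0 < ‖(n : K)‖ := norm_pos_iff.mpr (Nat.cast_ne_zero.mpr hn)
  have hpadic : (n : ℝ)⁻¹ ≤ ‖(n : K)‖ ^ c := by
    rw [← hv, hpow, Rat.AbsoluteValue.padic_eq_padicNorm]
    have h := (Rat.cast_le (K := ℝ)).mpr (inv_natCast_le_padicNorm p hn)
    push_cast at h
    exact h
  calc ‖(n : K)‖⁻¹ ≤ (n : ℝ) ^ c⁻¹ := by
        rw [Real.le_rpow_inv_iff_of_pos (by positivity) (by positivity) hc, Real.inv_rpow hnorm.le]
        exact (inv_le_comm₀ (by positivity) (by positivity)).mp hpadic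
    _ ≤ (n : ℝ) ^ (⌈c⁻¹⌉₊ : ℝ) := Real.rpow_le_rpow_of_exponent_le hn1 (Nat.le_ceil _)
    _ = (n : ℝ) ^ ⌈c⁻¹⌉₊ := Real.rpow_natCast _ _

lemma tendsto_add_one_pow_mul_pow_atTop_nhds_zero (M : ℕ) {ρ : ℝ} (h0 : 0 ≤ ρ) (h1 : ρ < 1) :
    Tendsto (fun k : ℕ => ((k : ℝ) + 1) ^ M * ρ ^ k) atTop (nhds 0) := by
  have hlim := (tendsto_pow_const_mul_const_pow_of_abs_lt_one M
    (abs_lt.mpr ⟨by linarith, h1⟩)).const_mul (2 ^ M)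
  rw [mul_zero] at hlim
  refine squeeze_zero' (.of_forall fun k => by positivity) ?_ hlim
  filter_upwards [eventually_ge_atTop 1] with k hk
  have hk' : (k : ℝ) + 1 ≤ 2 * k := by
    have : (1 : ℝ) ≤ k := mod_cast hk
    linarith
  calc ((k : ℝ) + 1) ^ M * ρ ^ k ≤ (2 * k) ^ M * ρ ^ k := by gcongr
    _ = 2 ^ M * ((k : ℝ) ^ M * ρ ^ k) := by ring

lemma mem_BRig_of_norm_coeff_le {K : Type*} [NormedField K] {g : PowerSeries K} {C : ℝ} {M : ℕ}
    (hg : ∀ k, ‖coeff k g‖ ≤ C * ((k : ℝ) + 1) ^ M) : g ∈ BRig K := by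
  intro ρ h0 h1
  have hlim := (tendsto_add_one_pow_mul_pow_atTop_nhds_zero M h0 h1).const_mul C
  rw [mul_zero] at hlim
  refine squeeze_zero (fun k => by positivity) (fun k => ?_) hlim
  rw [← mul_assoc]
  gcongr
  exact hg k

section Isometry

variable {K K' : Type*} [NormedField K] [NormedField K'] {f : K →+* K'}

lemma map_mem_BRig_iff (hf : ∀ x : K, ‖f x‖ = ‖x‖) {g : PowerSeries K} :
    PowerSeries.map f g ∈ BRig K' ↔ g ∈ BRig K := by
  change (∀ ρ : ℝ, _) ↔ ∀ ρ : ℝ, _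
  simp only [coeff_map, hf]

lemma map_BRig_eq_inf_range (hf : ∀ x : K, ‖f x‖ = ‖x‖) :
    (BRig K).map (PowerSeries.map f) = BRig K' ⊓ (PowerSeries.map f).range := by
  ext y
  constructor
  · rintro ⟨g, hg, rfl⟩
    exact ⟨(map_mem_BRig_iff hf).mpr hg, g, rfl⟩
  · rintro ⟨hy, g, rfl⟩
    exact ⟨g, (map_mem_BRig_iff hf).mp hy, rfl⟩

end Isometry

lemma PowerSeries.mem_range_map_of_map_mul_mem {K K' : Type*} [Field K] [Field K'] (f : K →+* K')
    {g : PowerSeries K} (hg : constantCoeff g ≠ 0) {y : PowerSeries K'}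
    (hgy : PowerSeries.map f g * y ∈ (PowerSeries.map f).range) :
    y ∈ (PowerSeries.map f).range := by
  obtain ⟨x, hx⟩ := hgy
  refine ⟨g⁻¹ * x, ?_⟩
  rw [map_mul, hx, ← mul_assoc, ← map_mul, PowerSeries.inv_mul_cancel g hg, map_one, one_mul]

def logOneAddDivX (K : Type*) [Field K] : PowerSeries K :=
  PowerSeries.mk fun k => (-1 : K) ^ k / ((k : K) + 1)

lemma constantCoeff_logOneAddDivX (K : Type*) [Field K] : constantCoeff (logOneAddDivX K) = 1 := by
  simp [logOneAddDivX]

lemma logOneAddDivX_mem_BRig {K : Type*} [NormedField K] [CharZero K]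
    (hna : IsNonarchimedean (fun x : K => ‖x‖)) : logOneAddDivX K ∈ BRig K := by
  obtain ⟨M, hM⟩ := exists_norm_natCast_inv_le_pow hna
  refine mem_BRig_of_norm_coeff_le (C := 1) (M := M) fun k => ?_
  simpa [logOneAddDivX] using hM (k + 1)

theorem statement5_general
    (K K' : Type*) [NormedField K] [NormedField K'] [CharZero K]
    -- `K ⊆ K'`, the absolute value of `K'` restricting to that of `K`
    (f : K →+* K') (hf : ∀ x : K, ‖f x‖ = ‖x‖)
    -- both absolute values are nonarchimedean ...
    (hna : IsNonarchimedean (fun x : K => ‖x‖))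
    -- `λ = log(1+X)/X = Σ_{k≥0} (-1)^k X^k/(k+1)`
    (lam : PowerSeries K)
    (hlam : lam = PowerSeries.mk (fun k => ((-1 : K) ^ k) / ((k : K) + 1))) :
    -- `λ` converges on the open unit disk, ...
    lam ∈ BRig K ∧
    -- ... `λ·B⁺_rig,K' ∩ B⁺_rig,K = λ·B⁺_rig,K` inside `K'⟦X⟧`, ...
    ({z : PowerSeries K' | ∃ y ∈ (BRig K' : Set (PowerSeries K')),
        z = (PowerSeries.map f) lam * y} ∩
      ((BRig K).map (PowerSeries.map f) : Set (PowerSeries K')) =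
      {z : PowerSeries K' | ∃ x ∈ ((BRig K).map (PowerSeries.map f) :
        Set (PowerSeries K')), z = (PowerSeries.map f) lam * x}) ∧
    -- ... that is, if `y ∈ B⁺_rig,K'` and `λ·y ∈ B⁺_rig,K`, then `y ∈ B⁺_rig,K`
    (∀ y : PowerSeries K', y ∈ BRig K' →
      (PowerSeries.map f) lam * y ∈ (BRig K).map (PowerSeries.map f) →
      y ∈ (BRig K).map (PowerSeries.map f)) := by
  obtain rfl : lam = logOneAddDivX K := hlam
  have hmem := logOneAddDivX_mem_BRig hna
  have hdiv (y : PowerSeries K') (hy : y ∈ BRig K')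
      (hlamy : PowerSeries.map f (logOneAddDivX K) * y ∈ (BRig K).map (PowerSeries.map f)) :
      y ∈ (BRig K).map (PowerSeries.map f) := by
    rw [map_BRig_eq_inf_range hf] at hlamy ⊢
    refine ⟨hy, PowerSeries.mem_range_map_of_map_mul_mem f ?_ hlamy.2⟩
    simp [constantCoeff_logOneAddDivX]
  refine ⟨hmem, ?_, hdiv⟩
  ext z
  constructor
  · rintro ⟨⟨y, hy, rfl⟩, hlamy⟩
    exact ⟨y, hdiv y hy hlamy, rfl⟩
  · rintro ⟨_, ⟨g, hg, rfl⟩, rfl⟩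
    exact ⟨⟨_, (map_mem_BRig_iff hf).mpr hg, rfl⟩,
      logOneAddDivX K * g, mul_mem hmem hg, map_mul _ _ _⟩

theorem statement5
    (p : ℕ) (hp : p.Prime)
    (K K' : Type*) [NormedField K] [NormedField K'] [CharZero K] [CharZero K']
    [CompleteSpace K] [CompleteSpace K']
    -- `K ⊆ K'`, the absolute value of `K'` restricting to that of `K`
    (f : K →+* K') (hf : ∀ x : K, ‖f x‖ = ‖x‖)
    -- both absolute values are nonarchimedean ...
    (hna : IsNonarchimedean (fun x : K => ‖x‖))
    (hna' : IsNonarchimedean (fun x : K' => ‖x‖))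
    -- ... and induced by discrete valuations
    (π : K) (hπ0 : 0 < ‖π‖) (hπ1 : ‖π‖ < 1)
    (hdisc : ∀ x : K, x ≠ 0 → ∃ n : ℤ, ‖x‖ = ‖π‖ ^ n)
    (π' : K') (hπ'0 : 0 < ‖π'‖) (hπ'1 : ‖π'‖ < 1)
    (hdisc' : ∀ x : K', x ≠ 0 → ∃ n : ℤ, ‖x‖ = ‖π'‖ ^ n)
    -- `λ = log(1+X)/X = Σ_{k≥0} (-1)^k X^k/(k+1)`
    (lam : PowerSeries K)
    (hlam : lam = PowerSeries.mk (fun k => ((-1 : K) ^ k) / ((k : K) + 1))) :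
    -- `λ` converges on the open unit disk, ...
    lam ∈ BRig K ∧
    -- ... `λ·B⁺_rig,K' ∩ B⁺_rig,K = λ·B⁺_rig,K` inside `K'⟦X⟧`, ...
    ({z : PowerSeries K' | ∃ y ∈ (BRig K' : Set (PowerSeries K')),
        z = (PowerSeries.map f) lam * y} ∩
      ((BRig K).map (PowerSeries.map f) : Set (PowerSeries K')) =
      {z : PowerSeries K' | ∃ x ∈ ((BRig K).map (PowerSeries.map f) :
        Set (PowerSeries K')), z = (PowerSeries.map f) lam * x}) ∧
    -- ... that is, if `y ∈ B⁺_rig,K'` and `λ·y ∈ B⁺_rig,K`, then `y ∈ B⁺_rig,K`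
    (∀ y : PowerSeries K', y ∈ BRig K' →
      (PowerSeries.map f) lam * y ∈ (BRig K).map (PowerSeries.map f) →
      y ∈ (BRig K).map (PowerSeries.map f)) :=
  statement5_general K K' f hf hna lam hlam
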